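/- Let μ be a multiplication on A that is a symmetric Leibniz multiplication, i.e. μ(x,μ(y,z)) = μ(μ(x,y),z) + μ(y,μ(x,z)) and μ(μ(x,y),z) = μ(x,μ(y,z)) + μ(μ(x,z),y) hold for all x,y,z ∈ A. Then μ is weakly associative: A_μ(x,y,z) + A_μ(y,z,x) − A_μ(y,x,z) = 0 for all x,y,z ∈ A. -/

import Mathlib

/-- The associator of a bilinear multiplication. -/
def assocMap {K A : Type*} [Field K] [AddCommGroup A] [Module K A]
    (μ : A →ₗ[K] A →ₗ[K] A) (x y z : A) : A :=
  μ x (μ y z) - μ (μ x y) z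

theorem symmetric_leibniz_weakly_associative_general {K A : Type*} [Field K]
    [AddCommGroup A] [Module K A]
    (μ : A →ₗ[K] A →ₗ[K] A)
    (hleft : ∀ x y z : A, μ x (μ y z) = μ (μ x y) z + μ y (μ x z))
    (hright : ∀ x y z : A, μ (μ x y) z = μ x (μ y z) + μ (μ x z) y) :
    ∀ x y z : A, assocMap μ x y z + assocMap μ y z x - assocMap μ y x z = 0 := by
  intro x y z
  have assoc_xyz : assocMap μ x y z = μ y (μ x z) := by
    rw [assocMap, hleft]
    abel
  have assoc_yzx : assocMap μ y z x = -μ (μ y x) z := by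
    rw [assocMap, hright]
    abel
  rw [assoc_xyz, assoc_yzx, assocMap]
  abel

/-- Any symmetric Leibniz multiplication is weakly associative. -/
theorem symmetric_leibniz_weakly_associative {K A : Type*} [Field K] [CharZero K]
    [AddCommGroup A] [Module K A]
    (μ : A →ₗ[K] A →ₗ[K] A)
    (hleft : ∀ x y z : A, μ x (μ y z) = μ (μ x y) z + μ y (μ x z))
    (hright : ∀ x y z : A, μ (μ x y) z = μ x (μ y z) + μ (μ x z) y) :
    ∀ x y z : A, assocMap μ x y z + assocMap μ y z x - assocMap μ y x z = 0 :=
  symmetric_leibniz_weakly_associative_general μ hleft hright
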